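/- Let β ∈ ℝ^N satisfy Σᵢ βᵢ·cᵢ = e₁, set φ := Σᵢ |βᵢ| and λ ∈ [0,∞)^N with λᵢ := |βᵢ|/φ. Fix a positive definite prior Σ⁰ and write V := V_{Σ⁰}. Then for every q ∈ [0,∞)^N and every s ≥ 0, 1/V(q + s·λ) ≥ 1/V(q) + s/φ². In particular (with β = β^{S*} under the Unique Minimizer assumption, so λ = λ* and φ = φ(S*)), the directional derivative of V at q along λ* satisfies |∂_{λ*}V(q)| ≥ V(q)²/φ(S*)². -/

import Mathlib

open Matrix Finset Filter Topology

noncomputable section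

namespace LearningTraps

variable {K N : ℕ}

/-- The information matrix `Σᵢ qᵢ · cᵢ cᵢᵀ`. -/
def infoMat (c : Fin N → Fin K → ℝ) (q : Fin N → ℝ) : Matrix (Fin K) (Fin K) ℝ :=
  ∑ i, q i • Matrix.vecMulVec (c i) (c i)

/-- Posterior variance `V_Σ(q) = [(Σ⁻¹ + Σᵢ qᵢ cᵢcᵢᵀ)⁻¹]₁₁`. -/
def postVar (hK : 0 < K) (c : Fin N → Fin K → ℝ)
    (Cov : Matrix (Fin K) (Fin K) ℝ) (q : Fin N → ℝ) : ℝ :=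
  (Cov⁻¹ + infoMat c q)⁻¹ ⟨0, hK⟩ ⟨0, hK⟩

/-- Posterior variance at integer signal counts. -/
def pv (hK : 0 < K) (c : Fin N → Fin K → ℝ)
    (Cov : Matrix (Fin K) (Fin K) ℝ) (q : Fin N → ℕ) : ℝ :=
  postVar hK c Cov fun i => (q i : ℝ)

/-- First standard basis vector of `ℝ^K`. -/
def e1 (hK : 0 < K) : Fin K → ℝ := Pi.single ⟨0, hK⟩ 1

/-- `S` is spanning: `e₁` lies in the span of `{cᵢ : i ∈ S}`. -/
def Spanning (hK : 0 < K) (c : Fin N → Fin K → ℝ) (S : Finset (Fin N)) : Prop :=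
  e1 hK ∈ Submodule.span ℝ (c '' ↑S)

/-- `S` is minimally spanning. -/
def MinSpanning (hK : 0 < K) (c : Fin N → Fin K → ℝ) (S : Finset (Fin N)) : Prop :=
  Spanning hK c S ∧ ∀ T ⊂ S, ¬ Spanning hK c T

/-- `β` represents `e₁` using only signals in `S`. -/
def IsRep (hK : 0 < K) (c : Fin N → Fin K → ℝ) (S : Finset (Fin N)) (β : Fin N → ℝ) : Prop :=
  (∀ i ∉ S, β i = 0) ∧ ∑ i, β i • c i = e1 hK

open Classical in
/-- The coefficients `β^S` (unique when `S` is minimally spanning). -/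
def betaVec (hK : 0 < K) (c : Fin N → Fin K → ℝ) (S : Finset (Fin N)) : Fin N → ℝ :=
  if h : ∃ β, IsRep hK c S β then h.choose else 0

/-- `φ(S) = Σ_{i∈S} |β^S_i|`. -/
def phi (hK : 0 < K) (c : Fin N → Fin K → ℝ) (S : Finset (Fin N)) : ℝ :=
  ∑ i, |betaVec hK c S i|

/-- The frequency vector `λ^S`. -/
def freq (hK : 0 < K) (c : Fin N → Fin K → ℝ) (S : Finset (Fin N)) : Fin N → ℝ :=
  fun i => |betaVec hK c S i| / phi hK c S

/-- The Unique Minimizer assumption: `Sstar` is the unique minimizer of `φ`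
among minimally spanning sets. -/
def UniqueMin (hK : 0 < K) (c : Fin N → Fin K → ℝ) (Sstar : Finset (Fin N)) : Prop :=
  MinSpanning hK c Sstar ∧
    ∀ S, MinSpanning hK c S → S ≠ Sstar → phi hK c Sstar < phi hK c S

/-- A `t`-optimal division of observations. -/
def TOptimal (hK : 0 < K) (c : Fin N → Fin K → ℝ) (Cov : Matrix (Fin K) (Fin K) ℝ)
    (t : ℕ) (q : Fin N → ℕ) : Prop :=
  (∑ i, q i) = t ∧ ∀ q' : Fin N → ℕ, (∑ i, q' i) = t → pv hK c Cov q ≤ pv hK c Cov q'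

/-- A greedy (myopic) acquisition sequence. -/
def Greedy (hK : 0 < K) (c : Fin N → Fin K → ℝ) (Cov : Matrix (Fin K) (Fin K) ℝ)
    (m : ℕ → Fin N → ℕ) : Prop :=
  m 0 = 0 ∧ ∀ t, ∃ i, m (t + 1) = m t + Pi.single i 1 ∧
    ∀ j, pv hK c Cov (m t + Pi.single i 1) ≤ pv hK c Cov (m t + Pi.single j 1)

open Classical in
/-- The set `A̅` of all signals whose coefficient vector lies in the span of `{cⱼ : j ∈ A}`. -/
def subClosure (c : Fin N → Fin K → ℝ) (A : Finset (Fin N)) : Finset (Fin N) :=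
  Finset.univ.filter fun i => c i ∈ Submodule.span ℝ (c '' ↑A)

/-- `S` is subspace-optimal: it uniquely minimizes `φ` among minimally spanning subsets
of its own subspace closure. -/
def SubspaceOptimal (hK : 0 < K) (c : Fin N → Fin K → ℝ) (S : Finset (Fin N)) : Prop :=
  MinSpanning hK c S ∧
    ∀ T ⊆ subClosure c S, MinSpanning hK c T → T ≠ S → phi hK c S < phi hK c T

/-- The asymptotic posterior variance `V*`, valued in `[0,∞]`. -/
def Vstar (hK : 0 < K) (c : Fin N → Fin K → ℝ) (l : Fin N → ℝ) : ENNReal :=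
  ⨆ (ε : ℝ) (_ : 0 < ε),
    ENNReal.ofReal ((infoMat c l + ε • (1 : Matrix (Fin K) (Fin K) ℝ))⁻¹ ⟨0, hK⟩ ⟨0, hK⟩)

end LearningTraps

/-!
The precision `1 / [M⁻¹]₁₁` of a positive definite `M` is the minimum of `xᵀ M x` over `x` with
`x₁ = 1`, so adding information `P ⪰ 0` raises the precision by at least `min_{x₁ = 1} xᵀ P x`.
When `P` is the information of `s` observations spread according to `λ`, this minimum is at least
`s / φ²`: for `x₁ = 1` we have `1 = Σᵢ βᵢ (cᵢ ⬝ x)`, and Cauchy–Schwarz weighted by `|βᵢ|` gives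
`1 ≤ φ · Σᵢ |βᵢ| (cᵢ ⬝ x)²`. The derivative bound follows from `(1 / V)' = -V' / V²`.
-/

namespace Matrix

variable {n : Type*} [Fintype n]

theorem IsHermitian.dotProduct_mulVec_comm {A : Matrix n n ℝ} (hA : A.IsHermitian)
    (x y : n → ℝ) : y ⬝ᵥ A *ᵥ x = x ⬝ᵥ A *ᵥ y := by
  rw [dotProduct_mulVec, ← mulVec_transpose, ← conjTranspose_eq_transpose_of_trivial, hA,
    dotProduct_comm]

variable [DecidableEq n]

theorem PosDef.mulVec_inv_mulVec {A : Matrix n n ℝ} (hA : A.PosDef) (v : n → ℝ) :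
    A *ᵥ (A⁻¹ *ᵥ v) = v := by
  rw [mulVec_mulVec, mul_nonsing_inv _ ((isUnit_iff_isUnit_det A).1 hA.isUnit), one_mulVec]

theorem PosDef.one_div_inv_apply_le {A : Matrix n n ℝ} (hA : A.PosDef) {x : n → ℝ} {i : n}
    (hx : x i = 1) : 1 / A⁻¹ i i ≤ x ⬝ᵥ A *ᵥ x := by
  set a := A⁻¹ i i
  set y := A⁻¹ *ᵥ Pi.single i 1
  have ha : 0 < a := hA.inv.diag_pos
  have hxy : x ⬝ᵥ A *ᵥ y = 1 := by rw [hA.mulVec_inv_mulVec, dotProduct_single_one, hx]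
  have hyy : y ⬝ᵥ A *ᵥ y = a := by
    rw [hA.mulVec_inv_mulVec, dotProduct_single_one]; simp [y, a]
  -- the quadratic form at `x - y / a`, where `y / a` is the minimiser
  have key := hA.posSemidef.dotProduct_mulVec_nonneg (x - a⁻¹ • y)
  simp only [star_trivial, mulVec_sub, mulVec_smul, dotProduct_sub, sub_dotProduct,
    dotProduct_smul, smul_dotProduct, smul_eq_mul, hA.isHermitian.dotProduct_mulVec_comm x y,
    hxy, hyy] at key
  field_simp at key
  rw [div_le_iff₀ ha]
  linarith

theorem PosDef.exists_apply_eq_one_dotProduct_mulVec_eq {A : Matrix n n ℝ} (hA : A.PosDef)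
    (i : n) : ∃ x : n → ℝ, x i = 1 ∧ x ⬝ᵥ A *ᵥ x = 1 / A⁻¹ i i := by
  have ha : A⁻¹ i i ≠ 0 := hA.inv.diag_pos.ne'
  refine ⟨(A⁻¹ i i)⁻¹ • A⁻¹ *ᵥ Pi.single i 1, ?_, ?_⟩
  · simp [ha]
  · rw [mulVec_smul, hA.mulVec_inv_mulVec, smul_dotProduct, dotProduct_smul,
      dotProduct_single_one]
    simp [ha]

theorem PosDef.one_div_inv_apply_add_le {A P : Matrix n n ℝ} (hA : A.PosDef)
    (hP : P.PosSemidef) (i : n) {r : ℝ} (hr : ∀ x : n → ℝ, x i = 1 → r ≤ x ⬝ᵥ P *ᵥ x) :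
    1 / A⁻¹ i i + r ≤ 1 / (A + P)⁻¹ i i := by
  obtain ⟨x, hxi, hx⟩ := (hA.add_posSemidef hP).exists_apply_eq_one_dotProduct_mulVec_eq i
  calc 1 / A⁻¹ i i + r ≤ x ⬝ᵥ A *ᵥ x + x ⬝ᵥ P *ᵥ x :=
        add_le_add (hA.one_div_inv_apply_le hxi) (hr x hxi)
    _ = 1 / (A + P)⁻¹ i i := by rw [← hx, add_mulVec, dotProduct_add]

theorem differentiableAt_inv_add_smul_apply (A P : Matrix n n ℝ) (i j : n) {t : ℝ}
    (ht : IsUnit (A + t • P).det) : DifferentiableAt ℝ (fun s : ℝ => (A + s • P)⁻¹ i j) t := by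
  open scoped Matrix.Norms.Operator in
  have hinv : DifferentiableAt ℝ (fun s : ℝ => (A + s • P)⁻¹) t := by
    simp only [nonsing_inv_eq_ringInverse]
    exact ((differentiableAt_const A).add (differentiableAt_id.smul_const P)).inverse
      ((isUnit_iff_isUnit_det _).2 ht)
  open scoped Matrix.Norms.Operator in
  exact (LinearMap.toContinuousLinearMap (entryLinearMap ℝ ℝ i j)).differentiableAt.comp t hinv

end Matrix

theorem sq_dotProduct_le_of_sum_smul_eq {ι n : Type*} [Fintype ι] [Fintype n]
    {c : ι → n → ℝ} {β : ι → ℝ} {v : n → ℝ} (hβ : ∑ i, β i • c i = v) (x : n → ℝ) :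
    (v ⬝ᵥ x) ^ 2 ≤ (∑ i, |β i|) * ∑ i, |β i| * (c i ⬝ᵥ x) ^ 2 := by
  have hv : v ⬝ᵥ x = ∑ i, β i * (c i ⬝ᵥ x) := by
    simp only [← hβ, sum_dotProduct, smul_dotProduct, smul_eq_mul]
  calc (v ⬝ᵥ x) ^ 2 ≤ (∑ i, |β i| * |c i ⬝ᵥ x|) ^ 2 := by
        rw [hv, ← sq_abs]
        gcongr
        simpa only [abs_mul] using Finset.abs_sum_le_sum_abs (fun i => β i * (c i ⬝ᵥ x)) univ
    _ ≤ (∑ i, |β i|) * ∑ i, |β i| * (c i ⬝ᵥ x) ^ 2 :=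
        Finset.sum_sq_le_sum_mul_sum_of_sq_le_mul _ (fun i _ => abs_nonneg _)
          (fun i _ => by positivity) fun i _ =>
            le_of_eq (by rw [mul_pow, sq_abs, sq_abs, ← mul_assoc, ← sq, sq_abs])

theorem le_of_forall_add_mul_le_of_hasDerivAt {p : ℝ → ℝ} {d r x : ℝ} (hp : HasDerivAt p d x)
    (h : ∀ s > 0, p x + s * r ≤ p (x + s)) : r ≤ d := by
  refine ge_of_tendsto hp.tendsto_slope_zero_right ?_
  filter_upwards [self_mem_nhdsWithin] with s (hs : 0 < s)
  rw [smul_eq_mul, le_inv_mul_iff₀ hs]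
  linarith [h s hs]

namespace LearningTraps

variable {K N : ℕ}

theorem infoMat_add (c : Fin N → Fin K → ℝ) (p q : Fin N → ℝ) :
    infoMat c (p + q) = infoMat c p + infoMat c q := by
  simp only [infoMat, Pi.add_apply, add_smul, Finset.sum_add_distrib]

theorem infoMat_smul (c : Fin N → Fin K → ℝ) (s : ℝ) (q : Fin N → ℝ) :
    infoMat c (s • q) = s • infoMat c q := by
  simp only [infoMat, Pi.smul_apply, smul_eq_mul, mul_smul, Finset.smul_sum]

theorem dotProduct_infoMat_mulVec (c : Fin N → Fin K → ℝ) (q : Fin N → ℝ) (x : Fin K → ℝ) :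
    x ⬝ᵥ infoMat c q *ᵥ x = ∑ i, q i * (c i ⬝ᵥ x) ^ 2 := by
  simp only [infoMat, sum_mulVec, dotProduct_sum, smul_mulVec, vecMulVec_mulVec,
    op_smul_eq_smul, dotProduct_smul, smul_eq_mul]
  exact Finset.sum_congr rfl fun i _ => by rw [dotProduct_comm x, sq]

theorem infoMat_posSemidef (c : Fin N → Fin K → ℝ) {q : Fin N → ℝ} (hq : ∀ i, 0 ≤ q i) :
    (infoMat c q).PosSemidef :=
  posSemidef_sum _ fun i _ => by
    simpa using (posSemidef_vecMulVec_self_star (c i)).smul (hq i)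

theorem posDef_inv_add_infoMat (c : Fin N → Fin K → ℝ) {Cov : Matrix (Fin K) (Fin K) ℝ}
    (hCov : Cov.PosDef) {q : Fin N → ℝ} (hq : ∀ i, 0 ≤ q i) : (Cov⁻¹ + infoMat c q).PosDef :=
  hCov.inv.add_posSemidef (infoMat_posSemidef c hq)

theorem one_div_sq_le_dotProduct_infoMat_mulVec (hK : 0 < K) {c : Fin N → Fin K → ℝ}
    {β : Fin N → ℝ} (hβ : ∑ i, β i • c i = e1 hK) {x : Fin K → ℝ} (hx : x ⟨0, hK⟩ = 1) :
    1 / (∑ j, |β j|) ^ 2 ≤ x ⬝ᵥ infoMat c (fun i => |β i| / ∑ j, |β j|) *ᵥ x := by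
  have h := sq_dotProduct_le_of_sum_smul_eq hβ x
  set φ := ∑ j, |β j|
  rw [e1, single_one_dotProduct, hx, one_pow] at h
  have hφ : 0 < φ := lt_of_le_of_ne (by positivity) fun h0 => by rw [← h0, zero_mul] at h; linarith
  rw [dotProduct_infoMat_mulVec]
  simp only [div_mul_eq_mul_div, ← Finset.sum_div]
  rw [div_le_div_iff₀ (by positivity) hφ]
  nlinarith

theorem one_div_postVar_add_smul_le (hK : 0 < K) {c : Fin N → Fin K → ℝ} {β : Fin N → ℝ}
    (hβ : ∑ i, β i • c i = e1 hK) {Cov : Matrix (Fin K) (Fin K) ℝ} (hCov : Cov.PosDef)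
    {q : Fin N → ℝ} (hq : ∀ i, 0 ≤ q i) {s : ℝ} (hs : 0 ≤ s) :
    1 / postVar hK c Cov q + s / (∑ j, |β j|) ^ 2 ≤
      1 / postVar hK c Cov (q + s • fun i => |β i| / ∑ j, |β j|) := by
  have hl : ∀ i, 0 ≤ |β i| / ∑ j, |β j| := fun i => by positivity
  unfold postVar
  rw [infoMat_add, infoMat_smul, ← add_assoc]
  refine (posDef_inv_add_infoMat c hCov hq).one_div_inv_apply_add_le
    ((infoMat_posSemidef c hl).smul hs) _ fun x hx => ?_
  rw [smul_mulVec, dotProduct_smul, smul_eq_mul, div_eq_mul_one_div s]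
  exact mul_le_mul_of_nonneg_left (one_div_sq_le_dotProduct_infoMat_mulVec hK hβ hx) hs

theorem sq_postVar_div_le_abs_lineDeriv (hK : 0 < K) {c : Fin N → Fin K → ℝ} {β : Fin N → ℝ}
    (hβ : ∑ i, β i • c i = e1 hK) {Cov : Matrix (Fin K) (Fin K) ℝ} (hCov : Cov.PosDef)
    {q : Fin N → ℝ} (hq : ∀ i, 0 ≤ q i) :
    postVar hK c Cov q ^ 2 / (∑ j, |β j|) ^ 2 ≤
      abs (lineDeriv ℝ (postVar hK c Cov) q fun i => |β i| / ∑ j, |β j|) := by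
  set l : Fin N → ℝ := fun i => |β i| / ∑ j, |β j|
  set A := Cov⁻¹ + infoMat c q
  have hA : A.PosDef := posDef_inv_add_infoMat c hCov hq
  set g := fun t : ℝ => postVar hK c Cov (q + t • l)
  have hg : g = fun t => (A + t • infoMat c l)⁻¹ ⟨0, hK⟩ ⟨0, hK⟩ := by
    ext t; simp only [g, postVar, infoMat_add, infoMat_smul, A, add_assoc]
  have hdiff : DifferentiableAt ℝ g 0 := by
    rw [hg]
    exact differentiableAt_inv_add_smul_apply _ _ _ _
      (by simpa using hA.isUnit.map detMonoidHom)
  have hg0 : g 0 = postVar hK c Cov q := by simp only [g, zero_smul, add_zero]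
  have hpos : 0 < postVar hK c Cov q := hA.inv.diag_pos
  -- the precision `1 / g` has slope at least `1 / φ²` to the right of `0`
  have hprec := le_of_forall_add_mul_le_of_hasDerivAt (r := 1 / (∑ j, |β j|) ^ 2)
    (hdiff.hasDerivAt.inv (hg0 ▸ hpos.ne')) fun s hs => by
    simp only [Pi.inv_apply, zero_add, g, zero_smul, add_zero, mul_one_div, ← one_div]
    exact one_div_postVar_add_smul_le hK hβ hCov hq hs.le
  rw [hg0, le_div_iff₀ (by positivity)] at hprec
  calc postVar hK c Cov q ^ 2 / (∑ j, |β j|) ^ 2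
        = 1 / (∑ j, |β j|) ^ 2 * postVar hK c Cov q ^ 2 := by ring
    _ ≤ -deriv g 0 := hprec
    _ ≤ |lineDeriv ℝ (postVar hK c Cov) q l| := neg_le_abs _

theorem precision_increase_along_freq_general {K N : ℕ} (hK : 0 < K)
    (c : Fin N → Fin K → ℝ) (β : Fin N → ℝ) (hβ : (∑ i, β i • c i) = e1 hK)
    (Cov : Matrix (Fin K) (Fin K) ℝ) (hCov : Cov.PosDef) :
    (∀ q : Fin N → ℝ, (∀ i, 0 ≤ q i) → ∀ s : ℝ, 0 ≤ s →
      1 / postVar hK c Cov (q + s • fun i => |β i| / ∑ j, |β j|) ≥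
        1 / postVar hK c Cov q + s / (∑ j, |β j|) ^ 2) ∧
    (∀ q : Fin N → ℝ, (∀ i, 0 ≤ q i) →
      (postVar hK c Cov q) ^ 2 / (∑ j, |β j|) ^ 2 ≤
        abs (lineDeriv ℝ (postVar hK c Cov) q fun i => |β i| / ∑ j, |β j|)) :=
  ⟨fun _ hq _ hs => one_div_postVar_add_smul_le hK hβ hCov hq hs,
    fun _ hq => sq_postVar_div_le_abs_lineDeriv hK hβ hCov hq⟩

/-- Sampling along the frequency direction `λᵢ = |βᵢ|/φ` of a representation
`Σᵢ βᵢcᵢ = e₁` increases posterior precision at rate at least `1/φ²`; in particular the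
directional derivative of `V` along `λ` satisfies `|∂_λ V(q)| ≥ V(q)²/φ²`. -/
theorem precision_increase_along_freq {K N : ℕ} (hK : 0 < K) (hN : 0 < N)
    (c : Fin N → Fin K → ℝ) (β : Fin N → ℝ) (hβ : (∑ i, β i • c i) = e1 hK)
    (Cov : Matrix (Fin K) (Fin K) ℝ) (hCov : Cov.PosDef) :
    (∀ q : Fin N → ℝ, (∀ i, 0 ≤ q i) → ∀ s : ℝ, 0 ≤ s →
      1 / postVar hK c Cov (q + s • fun i => |β i| / ∑ j, |β j|) ≥
        1 / postVar hK c Cov q + s / (∑ j, |β j|) ^ 2) ∧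
    (∀ q : Fin N → ℝ, (∀ i, 0 ≤ q i) →
      (postVar hK c Cov q) ^ 2 / (∑ j, |β j|) ^ 2 ≤
        abs (lineDeriv ℝ (postVar hK c Cov) q fun i => |β i| / ∑ j, |β j|)) :=
  precision_increase_along_freq_general hK c β hβ Cov hCov

end LearningTraps
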